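/- arXiv:1811.02655 — 7 statements merged into one kernel-verified Lean document; each statement's English description precedes it below -/
import Mathlib

section
/- The function f defined on [0,1]^2 × ℝ₊² by f(z,x) = (x₁-x₂)²/z₁ if x₁ ≥ x₂ and f(z,x) = (x₁-x₂)²/z₂ if x₁ ≤ x₂ (with the convention a/0 = ∞ if a > 0 and 0/0 = 0) is a convex function. -/
/-!
Writing `t⁺ = max t 0`, one has `f(z, x) = (x₁ - x₂)⁺² / z₁ + (x₂ - x₁)⁺² / z₂`. The
quadratic-over-linear function `(z, t) ↦ t² / z` is jointly convex on `z ≥ 0`, by the two-term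
Cauchy–Schwarz (Sedrakyan) inequality `(a + b)² / (c + d) ≤ a² / c + b² / d`, and it is
nondecreasing in `t ≥ 0`; composing it with the convex function `t ↦ t⁺` keeps it convex.
-/

/-- Division with the convention `a/0 = ∞` if `a > 0` and `0/0 = 0`. -/
noncomputable def pdiv (a b : ℝ) : EReal :=
  if 0 < b then ((a / b : ℝ) : EReal) else if 0 < a then ⊤ else 0

/-- The function `f` on `[0,1]² × ℝ₊²`. -/
noncomputable def f2 (z₁ z₂ x₁ x₂ : ℝ) : EReal :=
  if x₂ ≤ x₁ then pdiv ((x₁ - x₂)^2) z₁ else pdiv ((x₁ - x₂)^2) z₂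

noncomputable def quadOverLin (z t : ℝ) : EReal := pdiv (t ^ 2) z

lemma add_sq_div_add_le {a b c d : ℝ} (hc : 0 ≤ c) (hd : 0 ≤ d)
    (ha : c = 0 → a = 0) (hb : d = 0 → b = 0) :
    (a + b) ^ 2 / (c + d) ≤ a ^ 2 / c + b ^ 2 / d := by
  rcases hc.eq_or_lt with rfl | hc
  · simp [ha rfl]
  rcases hd.eq_or_lt with rfl | hd
  · simp [hb rfl]
  rw [div_add_div _ _ hc.ne' hd.ne', div_le_div_iff₀ (by positivity) (by positivity)]
  nlinarith [sq_nonneg (a * d - b * c), mul_pos hc hd]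

lemma sq_div_convex_comb_le {z w t s θ : ℝ} (hz : 0 ≤ z) (hw : 0 ≤ w) (hθ₀ : 0 < θ) (hθ₁ : θ < 1)
    (hzt : z = 0 → t = 0) (hws : w = 0 → s = 0) :
    (θ * t + (1 - θ) * s) ^ 2 / (θ * z + (1 - θ) * w) ≤ θ * (t ^ 2 / z) + (1 - θ) * (s ^ 2 / w) := by
  have scale : ∀ {c a b : ℝ}, c ≠ 0 → (c * a) ^ 2 / (c * b) = c * (a ^ 2 / b) := fun hc => by
    rw [mul_pow, sq, mul_assoc, mul_div_mul_left _ _ hc, mul_div_assoc]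
  have h1θ : 0 < 1 - θ := by linarith
  rw [← scale hθ₀.ne', ← scale h1θ.ne']
  refine add_sq_div_add_le (by positivity) (by positivity) (fun h => ?_) (fun h => ?_)
  · rw [hzt ((mul_eq_zero.1 h).resolve_left hθ₀.ne'), mul_zero]
  · rw [hws ((mul_eq_zero.1 h).resolve_left h1θ.ne'), mul_zero]

namespace quadOverLin

lemma nonneg (z t : ℝ) : 0 ≤ quadOverLin z t := by
  unfold quadOverLin pdiv
  split_ifs with hz
  · exact_mod_cast div_nonneg (sq_nonneg t) hz.le
  · exact le_top
  · exact le_rfl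

lemma eq_coe {z t : ℝ} (hz : 0 ≤ z) (hzt : z = 0 → t = 0) :
    quadOverLin z t = ((t ^ 2 / z : ℝ) : EReal) := by
  unfold quadOverLin pdiv
  rcases hz.eq_or_lt with rfl | hz
  · simp [hzt rfl]
  · rw [if_pos hz]

lemma eq_top {z t : ℝ} (hz : z ≤ 0) (ht : t ≠ 0) : quadOverLin z t = ⊤ := by
  unfold quadOverLin pdiv
  rw [if_neg hz.not_gt, if_pos (by positivity)]

lemma le_of_sq_le {z t t' : ℝ} (h : t ^ 2 ≤ t' ^ 2) : quadOverLin z t ≤ quadOverLin z t' := by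
  unfold quadOverLin pdiv
  split_ifs with hz ht' ht
  · exact EReal.coe_le_coe_iff.2 (by gcongr)
  · exact le_top
  · exact absurd (ht'.trans_le h) ht
  · exact le_top
  · exact le_rfl

lemma convex_comb_le {z w t s θ : ℝ} (hz : 0 ≤ z) (hw : 0 ≤ w) (hθ₀ : 0 ≤ θ) (hθ₁ : θ ≤ 1) :
    quadOverLin (θ * z + (1 - θ) * w) (θ * t + (1 - θ) * s)
      ≤ (θ : EReal) * quadOverLin z t + ((1 - θ : ℝ) : EReal) * quadOverLin w s := by
  rcases hθ₀.eq_or_lt with rfl | hθ₀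
  · simp
  rcases hθ₁.eq_or_lt with rfl | hθ₁
  · simp
  have h1θ : 0 < 1 - θ := by linarith
  by_cases hzt : z = 0 → t = 0
  swap
  · obtain ⟨hz0, ht⟩ := Classical.not_imp.1 hzt
    have hfin : ((1 - θ : ℝ) : EReal) * quadOverLin w s ≠ ⊥ :=
      ((mul_nonneg (EReal.coe_nonneg.2 h1θ.le) (nonneg w s)).trans_lt' EReal.bot_lt_zero).ne'
    rw [eq_top hz0.le ht, EReal.coe_mul_top_of_pos hθ₀, EReal.top_add_of_ne_bot hfin]
    exact le_top
  by_cases hws : w = 0 → s = 0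
  swap
  · obtain ⟨hw0, hs⟩ := Classical.not_imp.1 hws
    have hfin : (θ : EReal) * quadOverLin z t ≠ ⊥ :=
      ((mul_nonneg (EReal.coe_nonneg.2 hθ₀.le) (nonneg z t)).trans_lt' EReal.bot_lt_zero).ne'
    rw [eq_top hw0.le hs, EReal.coe_mul_top_of_pos h1θ, EReal.add_top_of_ne_bot hfin]
    exact le_top
  have hmix : θ * z + (1 - θ) * w = 0 → θ * t + (1 - θ) * s = 0 := fun h => by
    obtain ⟨hθz, hθw⟩ := (add_eq_zero_iff_of_nonneg (by positivity) (by positivity)).1 h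
    rw [hzt ((mul_eq_zero.1 hθz).resolve_left hθ₀.ne'),
      hws ((mul_eq_zero.1 hθw).resolve_left h1θ.ne')]
    ring
  rw [eq_coe (by positivity) hmix, eq_coe hz hzt, eq_coe hw hws]
  exact_mod_cast sq_div_convex_comb_le hz hw hθ₀ hθ₁ hzt hws

end quadOverLin

lemma max_convex_comb_le {a b θ : ℝ} (hθ₀ : 0 ≤ θ) (hθ₁ : θ ≤ 1) :
    max (θ * a + (1 - θ) * b) 0 ≤ θ * max a 0 + (1 - θ) * max b 0 := by
  have h1θ : 0 ≤ 1 - θ := by linarith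
  refine max_le ?_ (by positivity)
  gcongr <;> exact le_max_left _ _

lemma quadOverLin_max_convex_comb_le {z w a b θ : ℝ} (hz : 0 ≤ z) (hw : 0 ≤ w)
    (hθ₀ : 0 ≤ θ) (hθ₁ : θ ≤ 1) :
    quadOverLin (θ * z + (1 - θ) * w) (max (θ * a + (1 - θ) * b) 0)
      ≤ (θ : EReal) * quadOverLin z (max a 0) + ((1 - θ : ℝ) : EReal) * quadOverLin w (max b 0) :=
  (quadOverLin.le_of_sq_le (pow_le_pow_left₀ (le_max_right _ _)
    (max_convex_comb_le hθ₀ hθ₁) 2)).trans (quadOverLin.convex_comb_le hz hw hθ₀ hθ₁)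

lemma f2_eq_quadOverLin_add (z₁ z₂ x₁ x₂ : ℝ) :
    f2 z₁ z₂ x₁ x₂ = quadOverLin z₁ (max (x₁ - x₂) 0) + quadOverLin z₂ (max (x₂ - x₁) 0) := by
  have hzero : ∀ z, quadOverLin z 0 = 0 := fun z => by simp [quadOverLin, pdiv]
  unfold f2
  split_ifs with h
  · rw [max_eq_left (by linarith), max_eq_right (by linarith), hzero, add_zero]
    rfl
  · rw [max_eq_right (by linarith), max_eq_left (by linarith), hzero, zero_add, quadOverLin,
      ← neg_sub, neg_sq]

/-- `f` is convex on `[0,1]² × ℝ₊²`. -/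
theorem f2_convex :
    ∀ z₁ z₂ x₁ x₂ w₁ w₂ u₁ u₂ θ : ℝ,
      z₁ ∈ Set.Icc (0:ℝ) 1 → z₂ ∈ Set.Icc (0:ℝ) 1 → 0 ≤ x₁ → 0 ≤ x₂ →
      w₁ ∈ Set.Icc (0:ℝ) 1 → w₂ ∈ Set.Icc (0:ℝ) 1 → 0 ≤ u₁ → 0 ≤ u₂ →
      0 ≤ θ → θ ≤ 1 →
      f2 (θ*z₁ + (1-θ)*w₁) (θ*z₂ + (1-θ)*w₂) (θ*x₁ + (1-θ)*u₁) (θ*x₂ + (1-θ)*u₂)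
        ≤ (θ : EReal) * f2 z₁ z₂ x₁ x₂ + ((1-θ : ℝ) : EReal) * f2 w₁ w₂ u₁ u₂ := by
  intro z₁ z₂ x₁ x₂ w₁ w₂ u₁ u₂ θ hz₁ hz₂ _ _ hw₁ hw₂ _ _ hθ₀ hθ₁
  have hdiff : ∀ a b c d : ℝ, θ * a + (1 - θ) * b - (θ * c + (1 - θ) * d)
      = θ * (a - c) + (1 - θ) * (b - d) := fun _ _ _ _ => by ring
  simp only [f2_eq_quadOverLin_add, hdiff]
  calc _ ≤ ((θ : EReal) * quadOverLin z₁ (max (x₁ - x₂) 0)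
          + ((1 - θ : ℝ) : EReal) * quadOverLin w₁ (max (u₁ - u₂) 0))
        + ((θ : EReal) * quadOverLin z₂ (max (x₂ - x₁) 0)
          + ((1 - θ : ℝ) : EReal) * quadOverLin w₂ (max (u₂ - u₁) 0)) :=
        add_le_add (quadOverLin_max_convex_comb_le hz₁.1 hw₁.1 hθ₀ hθ₁)
          (quadOverLin_max_convex_comb_le hz₂.1 hw₂.1 hθ₀ hθ₁)
    _ = _ := by
        rw [EReal.left_distrib_of_nonneg (quadOverLin.nonneg _ _) (quadOverLin.nonneg _ _),
          EReal.left_distrib_of_nonneg (quadOverLin.nonneg _ _) (quadOverLin.nonneg _ _)]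
        exact add_add_add_comm _ _ _ _
end

section
/- The function g on [0,1]² × ℝ₊² defined by g(z,x;d₁,d₂) = max{ d₁·f(z₁,z₂,x₁,x₂/d₁) + (x₂²/z₂)(d₂ - 1/d₁), d₂·f(z₁,z₂,x₁/d₂,x₂) + (x₁²/z₁)(d₁ - 1/d₂) } is convex for any fixed parameters d₁, d₂ > 0 with d₁d₂ ≥ 1. -/
/-- The function `g(z,x;d₁,d₂)`, the pointwise maximum of the two strengthened
decompositions. -/
noncomputable def g2 (d₁ d₂ z₁ z₂ x₁ x₂ : ℝ) : EReal :=
  max ((d₁ : EReal) * f2 z₁ z₂ x₁ (x₂ / d₁) + pdiv (x₂^2) z₂ * ((d₂ - 1/d₁ : ℝ) : EReal))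
      ((d₂ : EReal) * f2 z₁ z₂ (x₁ / d₂) x₂ + pdiv (x₁^2) z₁ * ((d₁ - 1/d₂ : ℝ) : EReal))

lemma pdiv_nonneg {a : ℝ} (ha : 0 ≤ a) (b : ℝ) : 0 ≤ pdiv a b := by
  unfold pdiv
  split_ifs
  · exact EReal.coe_nonneg.2 (by positivity)
  · exact le_top
  · exact le_rfl

lemma pdiv_zero_left (b : ℝ) : pdiv 0 b = 0 := by
  simp [pdiv]

noncomputable def posSqDiv (t z : ℝ) : EReal := pdiv (max t 0 ^ 2) z

lemma posSqDiv_nonneg (t z : ℝ) : 0 ≤ posSqDiv t z := pdiv_nonneg (sq_nonneg _) z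

lemma posSqDiv_of_nonpos {t : ℝ} (ht : t ≤ 0) (z : ℝ) : posSqDiv t z = 0 := by
  rw [posSqDiv, max_eq_right ht, sq, zero_mul, pdiv_zero_left]

lemma coe_le_posSqDiv {t z l : ℝ} (hz : 0 ≤ z) (hl : 0 ≤ l) :
    ((2 * l * t - l ^ 2 * z : ℝ) : EReal) ≤ posSqDiv t z := by
  rcases le_or_gt t 0 with ht | ht
  · rw [posSqDiv_of_nonpos ht]
    exact EReal.coe_nonpos.2 (by nlinarith)
  rcases hz.eq_or_lt with rfl | hz
  · simp [posSqDiv, pdiv, ht]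
  · rw [posSqDiv, pdiv, if_pos hz, max_eq_left ht.le, EReal.coe_le_coe_iff, le_div_iff₀ hz]
    nlinarith [sq_nonneg (t - l * z)]

lemma posSqDiv_le_of_forall_coe_le {t z : ℝ} {Y : EReal}
    (h : ∀ l, 0 ≤ l → ((2 * l * t - l ^ 2 * z : ℝ) : EReal) ≤ Y) : posSqDiv t z ≤ Y := by
  rcases le_or_gt t 0 with ht | ht
  · simpa [posSqDiv_of_nonpos ht] using h 0 le_rfl
  rcases lt_or_ge 0 z with hz | hz
  · have := h (t / z) (by positivity)
    rw [posSqDiv, pdiv, if_pos hz, max_eq_left ht.le]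
    convert this using 2
    field_simp
    ring
  · have htop : posSqDiv t z = ⊤ := by simp [posSqDiv, pdiv, not_lt.2 hz, ht]
    rw [htop, top_le_iff, EReal.eq_top_iff_forall_lt]
    intro y
    have hl : 0 ≤ (|y| + 1) / (2 * t) := by positivity
    refine lt_of_lt_of_le (EReal.coe_lt_coe_iff.2 ?_) (h _ hl)
    have h2t : 2 * ((|y| + 1) / (2 * t)) * t = |y| + 1 := by field_simp
    nlinarith [le_abs_self y, sq_nonneg ((|y| + 1) / (2 * t))]

lemma f2_eq_max_posSqDiv (z₁ z₂ a b : ℝ) :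
    f2 z₁ z₂ a b = max (posSqDiv (a - b) z₁) (posSqDiv (b - a) z₂) := by
  rcases le_total b a with h | h
  · rw [f2, if_pos h, posSqDiv_of_nonpos (sub_nonpos.2 h), posSqDiv, max_eq_left (sub_nonneg.2 h),
      max_eq_left (pdiv_nonneg (sq_nonneg _) _)]
  · rw [f2, posSqDiv_of_nonpos (sub_nonpos.2 h), max_eq_right (posSqDiv_nonneg _ _), posSqDiv,
      max_eq_left (sub_nonneg.2 h), sub_sq_comm]
    split_ifs with h'
    · rw [le_antisymm h h', sub_self, sq, zero_mul, pdiv_zero_left, pdiv_zero_left]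
    · rfl

/-- Mathlib's `ConvexOn` needs a module as codomain, which `EReal` is not. -/
def ERealConvexOn {E : Type*} [AddCommGroup E] [Module ℝ E] (s : Set E) (φ : E → EReal) : Prop :=
  ∀ ⦃x⦄, x ∈ s → ∀ ⦃y⦄, y ∈ s → ∀ ⦃θ : ℝ⦄, 0 ≤ θ → θ ≤ 1 →
    φ (θ • x + (1 - θ) • y) ≤ (θ : EReal) * φ x + ((1 - θ : ℝ) : EReal) * φ y

lemma EReal.coe_mul_add_of_nonneg {c : ℝ} (hc : 0 ≤ c) (a b : EReal) :
    (c : EReal) * (a + b) = c * a + c * b :=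
  EReal.left_distrib_of_nonneg_of_ne_top (EReal.coe_nonneg.2 hc) (EReal.coe_ne_top c) a b

namespace ERealConvexOn

variable {E : Type*} [AddCommGroup E] [Module ℝ E] {s : Set E} {φ ψ : E → EReal}

lemma congr (hφ : ERealConvexOn s φ) (hs : Convex ℝ s) (h : Set.EqOn φ ψ s) :
    ERealConvexOn s ψ := by
  intro x hx y hy θ hθ₀ hθ₁
  rw [← h hx, ← h hy, ← h (hs hx hy hθ₀ (sub_nonneg.2 hθ₁) (add_sub_cancel θ 1))]
  exact hφ hx hy hθ₀ hθ₁

lemma sup (hφ : ERealConvexOn s φ) (hψ : ERealConvexOn s ψ) :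
    ERealConvexOn s (fun x ↦ max (φ x) (ψ x)) := by
  intro x hx y hy θ hθ₀ hθ₁
  have hθ : (0 : EReal) ≤ θ := EReal.coe_nonneg.2 hθ₀
  have hθ' : (0 : EReal) ≤ ((1 - θ : ℝ) : EReal) := EReal.coe_nonneg.2 (sub_nonneg.2 hθ₁)
  apply max_le
  · exact (hφ hx hy hθ₀ hθ₁).trans (add_le_add (mul_le_mul_of_nonneg_left (le_max_left _ _) hθ)
      (mul_le_mul_of_nonneg_left (le_max_left _ _) hθ'))
  · exact (hψ hx hy hθ₀ hθ₁).trans (add_le_add (mul_le_mul_of_nonneg_left (le_max_right _ _) hθ)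
      (mul_le_mul_of_nonneg_left (le_max_right _ _) hθ'))

lemma add (hφ : ERealConvexOn s φ) (hψ : ERealConvexOn s ψ) :
    ERealConvexOn s (fun x ↦ φ x + ψ x) := by
  intro x hx y hy θ hθ₀ hθ₁
  calc φ (θ • x + (1 - θ) • y) + ψ (θ • x + (1 - θ) • y)
      ≤ ((θ : EReal) * φ x + ((1 - θ : ℝ) : EReal) * φ y)
          + ((θ : EReal) * ψ x + ((1 - θ : ℝ) : EReal) * ψ y) :=
        add_le_add (hφ hx hy hθ₀ hθ₁) (hψ hx hy hθ₀ hθ₁)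
    _ = (θ : EReal) * (φ x + ψ x) + ((1 - θ : ℝ) : EReal) * (φ y + ψ y) := by
        rw [add_add_add_comm, EReal.coe_mul_add_of_nonneg hθ₀, EReal.coe_mul_add_of_nonneg (sub_nonneg.2 hθ₁)]

lemma const_mul (hφ : ERealConvexOn s φ) {c : ℝ} (hc : 0 ≤ c) :
    ERealConvexOn s (fun x ↦ (c : EReal) * φ x) := by
  intro x hx y hy θ hθ₀ hθ₁
  calc (c : EReal) * φ (θ • x + (1 - θ) • y)
      ≤ c * ((θ : EReal) * φ x + ((1 - θ : ℝ) : EReal) * φ y) :=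
        mul_le_mul_of_nonneg_left (hφ hx hy hθ₀ hθ₁) (EReal.coe_nonneg.2 hc)
    _ = (θ : EReal) * (c * φ x) + ((1 - θ : ℝ) : EReal) * (c * φ y) := by
        rw [EReal.coe_mul_add_of_nonneg hc, mul_left_comm, mul_left_comm (c : EReal)]

lemma posSqDiv_comp (ℓ m : E →ₗ[ℝ] ℝ) (hm : ∀ p ∈ s, 0 ≤ m p) :
    ERealConvexOn s (fun p ↦ posSqDiv (ℓ p) (m p)) := by
  intro x hx y hy θ hθ₀ hθ₁
  refine posSqDiv_le_of_forall_coe_le fun l hl ↦ ?_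
  have hθ : (0 : EReal) ≤ θ := EReal.coe_nonneg.2 hθ₀
  have hθ' : (0 : EReal) ≤ ((1 - θ : ℝ) : EReal) := EReal.coe_nonneg.2 (sub_nonneg.2 hθ₁)
  calc ((2 * l * ℓ (θ • x + (1 - θ) • y) - l ^ 2 * m (θ • x + (1 - θ) • y) : ℝ) : EReal)
      = (θ : EReal) * ((2 * l * ℓ x - l ^ 2 * m x : ℝ) : EReal)
          + ((1 - θ : ℝ) : EReal) * ((2 * l * ℓ y - l ^ 2 * m y : ℝ) : EReal) := by
        rw [← EReal.coe_mul, ← EReal.coe_mul, ← EReal.coe_add, EReal.coe_eq_coe_iff]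
        simp only [map_add, map_smul, smul_eq_mul]
        ring
    _ ≤ (θ : EReal) * posSqDiv (ℓ x) (m x) + ((1 - θ : ℝ) : EReal) * posSqDiv (ℓ y) (m y) :=
        add_le_add (mul_le_mul_of_nonneg_left (coe_le_posSqDiv (hm x hx) hl) hθ)
          (mul_le_mul_of_nonneg_left (coe_le_posSqDiv (hm y hy) hl) hθ')

lemma f2_comp (m₁ m₂ a b : E →ₗ[ℝ] ℝ) (hm₁ : ∀ p ∈ s, 0 ≤ m₁ p) (hm₂ : ∀ p ∈ s, 0 ≤ m₂ p) :
    ERealConvexOn s (fun p ↦ f2 (m₁ p) (m₂ p) (a p) (b p)) := by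
  simp only [f2_eq_max_posSqDiv]
  exact (posSqDiv_comp (a - b) m₁ hm₁).sup (posSqDiv_comp (b - a) m₂ hm₂)

end ERealConvexOn

lemma erealConvexOn_g2 {d₁ d₂ : ℝ} (hd₁ : 0 < d₁) (hd₂ : 0 < d₂) (hdd : 1 ≤ d₁ * d₂) :
    ERealConvexOn (Set.Ici 0)
      (fun p : (ℝ × ℝ) × (ℝ × ℝ) ↦ g2 d₁ d₂ p.1.1 p.1.2 p.2.1 p.2.2) := by
  let z₁ : (ℝ × ℝ) × (ℝ × ℝ) →ₗ[ℝ] ℝ := .fst ℝ ℝ ℝ ∘ₗ .fst ℝ (ℝ × ℝ) (ℝ × ℝ)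
  let z₂ : (ℝ × ℝ) × (ℝ × ℝ) →ₗ[ℝ] ℝ := .snd ℝ ℝ ℝ ∘ₗ .fst ℝ (ℝ × ℝ) (ℝ × ℝ)
  let x₁ : (ℝ × ℝ) × (ℝ × ℝ) →ₗ[ℝ] ℝ := .fst ℝ ℝ ℝ ∘ₗ .snd ℝ (ℝ × ℝ) (ℝ × ℝ)
  let x₂ : (ℝ × ℝ) × (ℝ × ℝ) →ₗ[ℝ] ℝ := .snd ℝ ℝ ℝ ∘ₗ .snd ℝ (ℝ × ℝ) (ℝ × ℝ)
  have hz₁ : ∀ p ∈ Set.Ici 0, 0 ≤ z₁ p := fun p hp ↦ hp.1.1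
  have hz₂ : ∀ p ∈ Set.Ici 0, 0 ≤ z₂ p := fun p hp ↦ hp.1.2
  have hc₁ : 0 ≤ d₁ - 1 / d₂ := by
    rw [sub_nonneg, div_le_iff₀ hd₂]; exact hdd
  have hc₂ : 0 ≤ d₂ - 1 / d₁ := by
    rw [sub_nonneg, div_le_iff₀ hd₁, mul_comm]; exact hdd
  have branch₁ := ((ERealConvexOn.f2_comp z₁ z₂ x₁ (d₁⁻¹ • x₂) hz₁ hz₂).const_mul hd₁.le).add
    ((ERealConvexOn.posSqDiv_comp x₂ z₂ hz₂).const_mul hc₂)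
  have branch₂ := ((ERealConvexOn.f2_comp z₁ z₂ (d₂⁻¹ • x₁) x₂ hz₁ hz₂).const_mul hd₂.le).add
    ((ERealConvexOn.posSqDiv_comp x₁ z₁ hz₁).const_mul hc₁)
  refine (branch₁.sup branch₂).congr (convex_Ici 0) fun p hp ↦ ?_
  have hx₁ : 0 ≤ p.2.1 := hp.2.1
  have hx₂ : 0 ≤ p.2.2 := hp.2.2
  simp only [z₁, z₂, x₁, x₂, LinearMap.coe_comp, LinearMap.coe_fst, LinearMap.coe_snd,
    Function.comp_apply, LinearMap.smul_apply, smul_eq_mul, g2, posSqDiv, max_eq_left hx₁,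
    max_eq_left hx₂, mul_comm, div_eq_inv_mul]

/-- `g(·,·;d₁,d₂)` is convex on `[0,1]² × ℝ₊²` for any `d₁,d₂ > 0` with `d₁d₂ ≥ 1`. -/
theorem g2_convex (d₁ d₂ : ℝ) (hd₁ : 0 < d₁) (hd₂ : 0 < d₂) (hdd : 1 ≤ d₁ * d₂) :
    ∀ z₁ z₂ x₁ x₂ w₁ w₂ u₁ u₂ θ : ℝ,
      z₁ ∈ Set.Icc (0:ℝ) 1 → z₂ ∈ Set.Icc (0:ℝ) 1 → 0 ≤ x₁ → 0 ≤ x₂ →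
      w₁ ∈ Set.Icc (0:ℝ) 1 → w₂ ∈ Set.Icc (0:ℝ) 1 → 0 ≤ u₁ → 0 ≤ u₂ →
      0 ≤ θ → θ ≤ 1 →
      g2 d₁ d₂ (θ*z₁ + (1-θ)*w₁) (θ*z₂ + (1-θ)*w₂) (θ*x₁ + (1-θ)*u₁) (θ*x₂ + (1-θ)*u₂)
        ≤ (θ : EReal) * g2 d₁ d₂ z₁ z₂ x₁ x₂ + ((1-θ : ℝ) : EReal) * g2 d₁ d₂ w₁ w₂ u₁ u₂ := by
  intro z₁ z₂ x₁ x₂ w₁ w₂ u₁ u₂ θ hz₁ hz₂ hx₁ hx₂ hw₁ hw₂ hu₁ hu₂ hθ₀ hθ₁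
  have hp : ((z₁, z₂), (x₁, x₂)) ∈ Set.Ici 0 := ⟨⟨hz₁.1, hz₂.1⟩, hx₁, hx₂⟩
  have hq : ((w₁, w₂), (u₁, u₂)) ∈ Set.Ici 0 := ⟨⟨hw₁.1, hw₂.1⟩, hu₁, hu₂⟩
  simpa only [Prod.smul_mk, Prod.mk_add_mk, smul_eq_mul] using
    erealConvexOn_g2 hd₁ hd₂ hdd hp hq hθ₀ hθ₁
end

section
/- Let z₁ ≥ z₂ with z₁, z₂ ∈ (0,1], let x₁, x₂ ≥ 0, and d₁, d₂ > 0 with d₁d₂ ≥ 1. If d₁x₁ ≥ x₂ then the maximum defining g equals (d₁x₁² - 2x₁x₂ + x₂²/d₁)/z₁ + (x₂²/z₂)(d₂ - 1/d₁), and if d₁x₁ ≤ x₂ then it equals (d₁x₁² - 2x₁x₂ + d₂x₂²)/z₂. That is, when z₁ ≥ z₂ the first term in the max defining g attains the maximum. -/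
noncomputable def g2Left (d₁ d₂ z₁ z₂ x₁ x₂ : ℝ) : EReal :=
  (d₁ : EReal) * f2 z₁ z₂ x₁ (x₂ / d₁) + pdiv (x₂^2) z₂ * ((d₂ - 1/d₁ : ℝ) : EReal)

noncomputable def g2Right (d₁ d₂ z₁ z₂ x₁ x₂ : ℝ) : EReal :=
  (d₂ : EReal) * f2 z₁ z₂ (x₁ / d₂) x₂ + pdiv (x₁^2) z₁ * ((d₁ - 1/d₂ : ℝ) : EReal)

lemma g2_eq_max_g2Left_g2Right (d₁ d₂ z₁ z₂ x₁ x₂ : ℝ) :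
    g2 d₁ d₂ z₁ z₂ x₁ x₂ = max (g2Left d₁ d₂ z₁ z₂ x₁ x₂) (g2Right d₁ d₂ z₁ z₂ x₁ x₂) :=
  rfl

lemma pdiv_of_pos {a b : ℝ} (hb : 0 < b) : pdiv a b = ((a / b : ℝ) : EReal) :=
  if_pos hb

section f2

variable {z₁ z₂ a b : ℝ}

lemma f2_of_le (h : b ≤ a) (hz₁ : 0 < z₁) : f2 z₁ z₂ a b = (((a - b)^2 / z₁ : ℝ) : EReal) := by
  rw [f2, if_pos h, pdiv_of_pos hz₁]

lemma f2_of_ge (h : a ≤ b) (hz₂ : 0 < z₂) : f2 z₁ z₂ a b = (((a - b)^2 / z₂ : ℝ) : EReal) := by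
  rcases h.lt_or_eq with h | rfl
  · rw [f2, if_neg h.not_ge, pdiv_of_pos hz₂]
  · simp [f2, pdiv]

lemma f2_le (hz₂ : 0 < z₂) (hz : z₂ ≤ z₁) : f2 z₁ z₂ a b ≤ (((a - b)^2 / z₂ : ℝ) : EReal) := by
  rcases le_total b a with h | h
  · rw [f2_of_le h (hz₂.trans_le hz)]
    exact EReal.coe_le_coe (div_le_div_of_nonneg_left (sq_nonneg _) hz₂ hz)
  · rw [f2_of_ge h hz₂]

end f2

section terms

variable {d₁ d₂ z₁ z₂ x₁ x₂ : ℝ}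

lemma g2Left_of_le (hd₁ : 0 < d₁) (hz₁ : 0 < z₁) (hz₂ : 0 < z₂) (h : x₂ ≤ d₁ * x₁) :
    g2Left d₁ d₂ z₁ z₂ x₁ x₂
      = (((d₁ * x₁^2 - 2 * x₁ * x₂ + x₂^2 / d₁) / z₁ + (x₂^2 / z₂) * (d₂ - 1/d₁) : ℝ) : EReal) := by
  have h' : x₂ / d₁ ≤ x₁ := (div_le_iff₀' hd₁).2 h
  rw [g2Left, f2_of_le h' hz₁, pdiv_of_pos hz₂]
  norm_cast
  congr 1
  field_simp
  ring

lemma g2Left_of_ge (hd₁ : 0 < d₁) (hz₂ : 0 < z₂) (h : d₁ * x₁ ≤ x₂) :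
    g2Left d₁ d₂ z₁ z₂ x₁ x₂ = (((d₁ * x₁^2 - 2 * x₁ * x₂ + d₂ * x₂^2) / z₂ : ℝ) : EReal) := by
  have h' : x₁ ≤ x₂ / d₁ := (le_div_iff₀' hd₁).2 h
  rw [g2Left, f2_of_ge h' hz₂, pdiv_of_pos hz₂]
  norm_cast
  field_simp
  ring

lemma g2Right_le (hd₂ : 0 < d₂) (hdd : 1 ≤ d₁ * d₂) (hz₂ : 0 < z₂) (hz : z₂ ≤ z₁) :
    g2Right d₁ d₂ z₁ z₂ x₁ x₂ ≤ (((d₁ * x₁^2 - 2 * x₁ * x₂ + d₂ * x₂^2) / z₂ : ℝ) : EReal) := by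
  have hc : 0 ≤ d₁ - 1/d₂ := sub_nonneg.2 ((div_le_iff₀ hd₂).2 (by linarith))
  calc g2Right d₁ d₂ z₁ z₂ x₁ x₂
      ≤ (d₂ : EReal) * (((x₁ / d₂ - x₂)^2 / z₂ : ℝ) : EReal) + ((x₁^2 / z₂ * (d₁ - 1/d₂) : ℝ) : EReal) := by
        rw [g2Right, pdiv_of_pos (hz₂.trans_le hz), ← EReal.coe_mul]
        gcongr
        exact f2_le hz₂ hz
    _ = (((d₁ * x₁^2 - 2 * x₁ * x₂ + d₂ * x₂^2) / z₂ : ℝ) : EReal) := by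
        norm_cast
        field_simp
        ring

lemma g2Right_le_of_le (hd₁ : 0 < d₁) (hd₂ : 0 < d₂) (hdd : 1 ≤ d₁ * d₂) (hz₂ : 0 < z₂)
    (hz : z₂ ≤ z₁) (hx₁ : 0 ≤ x₁) (hx₂ : 0 ≤ x₂) (h : x₂ ≤ d₁ * x₁) :
    g2Right d₁ d₂ z₁ z₂ x₁ x₂
      ≤ (((d₁ * x₁^2 - 2 * x₁ * x₂ + x₂^2 / d₁) / z₁ + (x₂^2 / z₂) * (d₂ - 1/d₁) : ℝ) : EReal) := by
  have hz₁ := hz₂.trans_le hz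
  have hw : 0 ≤ 1/z₂ - 1/z₁ := sub_nonneg.2 (one_div_le_one_div_of_le hz₂ hz)
  rcases le_total (d₂ * x₂) x₁ with h' | h'
  · have hc : 0 ≤ d₂ - 1/d₁ := sub_nonneg.2 ((div_le_iff₀ hd₁).2 (by linarith))
    rw [g2Right, f2_of_le ((le_div_iff₀' hd₂).2 h') hz₁, pdiv_of_pos hz₁]
    norm_cast
    refine le_of_sub_nonneg ((mul_nonneg (mul_nonneg (sq_nonneg x₂) hc) hw).trans_eq ?_)
    field_simp
    ring
  · have hX : 0 ≤ x₁ * (d₂ * x₂ - x₁) / d₂ + x₂ * (d₁ * x₁ - x₂) / d₁ := by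
      have hu : 0 ≤ d₁ * x₁ - x₂ := sub_nonneg.2 h
      have hv : 0 ≤ d₂ * x₂ - x₁ := sub_nonneg.2 h'
      positivity
    rw [g2Right, f2_of_ge ((div_le_iff₀' hd₂).2 h') hz₂, pdiv_of_pos hz₁]
    norm_cast
    refine le_of_sub_nonneg ((mul_nonneg hX hw).trans_eq ?_)
    field_simp
    ring

end terms

theorem g2_explicit_z1_ge_z2_general (d₁ d₂ z₁ z₂ x₁ x₂ : ℝ)
    (hd₁ : 0 < d₁) (hd₂ : 0 < d₂) (hdd : 1 ≤ d₁ * d₂)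
    (hz₂ : 0 < z₂) (hz : z₂ ≤ z₁)
    (hx₁ : 0 ≤ x₁) (hx₂ : 0 ≤ x₂) :
    (x₂ ≤ d₁ * x₁ →
      g2 d₁ d₂ z₁ z₂ x₁ x₂
        = (((d₁ * x₁^2 - 2 * x₁ * x₂ + x₂^2 / d₁) / z₁
            + (x₂^2 / z₂) * (d₂ - 1/d₁) : ℝ) : EReal)) ∧
    (d₁ * x₁ ≤ x₂ →
      g2 d₁ d₂ z₁ z₂ x₁ x₂
        = (((d₁ * x₁^2 - 2 * x₁ * x₂ + d₂ * x₂^2) / z₂ : ℝ) : EReal)) := by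
  have hz₁ := hz₂.trans_le hz
  rw [g2_eq_max_g2Left_g2Right]
  refine ⟨fun h => ?_, fun h => ?_⟩
  · rw [g2Left_of_le hd₁ hz₁ hz₂ h]
    exact max_eq_left (g2Right_le_of_le hd₁ hd₂ hdd hz₂ hz hx₁ hx₂ h)
  · rw [g2Left_of_ge hd₁ hz₂ h]
    exact max_eq_left (g2Right_le hd₂ hdd hz₂ hz)

/-- Explicit expression of `g` when `z₁ ≥ z₂` (the first term attains the maximum). -/
theorem g2_explicit_z1_ge_z2 (d₁ d₂ z₁ z₂ x₁ x₂ : ℝ)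
    (hd₁ : 0 < d₁) (hd₂ : 0 < d₂) (hdd : 1 ≤ d₁ * d₂)
    (hz₂ : 0 < z₂) (hz : z₂ ≤ z₁) (hz₁ : z₁ ≤ 1)
    (hx₁ : 0 ≤ x₁) (hx₂ : 0 ≤ x₂) :
    (x₂ ≤ d₁ * x₁ →
      g2 d₁ d₂ z₁ z₂ x₁ x₂
        = (((d₁ * x₁^2 - 2 * x₁ * x₂ + x₂^2 / d₁) / z₁
            + (x₂^2 / z₂) * (d₂ - 1/d₁) : ℝ) : EReal)) ∧
    (d₁ * x₁ ≤ x₂ →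
      g2 d₁ d₂ z₁ z₂ x₁ x₂
        = (((d₁ * x₁^2 - 2 * x₁ * x₂ + d₂ * x₂^2) / z₂ : ℝ) : EReal)) :=
  g2_explicit_z1_ge_z2_general d₁ d₂ z₁ z₂ x₁ x₂ hd₁ hd₂ hdd hz₂ hz hx₁ hx₂
end

section
/- A point (z,x,s) ∈ [0,1]² × ℝ₊³ satisfies f(z,x) ≤ s if and only if there exist v, w ∈ ℝ such that v ≥ x₁ - x₂, v² ≤ s·z₁, w ≥ x₂ - x₁, and w² ≤ s·z₂. -/
lemma pdiv_le_coe_iff {a b s : ℝ} (ha : 0 ≤ a) (hb : 0 ≤ b) (hs : 0 ≤ s) :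
    pdiv a b ≤ (s : EReal) ↔ a ≤ s * b := by
  unfold pdiv
  rcases hb.lt_or_eq with hb | rfl
  · rw [if_pos hb, EReal.coe_le_coe_iff, div_le_iff₀ hb]
  · rcases ha.lt_or_eq with ha | rfl
    · simp [ha, ha.not_ge]
    · simp [hs]

lemma exists_ge_sq_le_iff (d c : ℝ) : (∃ v, d ≤ v ∧ v ^ 2 ≤ c) ↔ max d 0 ^ 2 ≤ c := by
  constructor
  · rintro ⟨v, hdv, hvc⟩
    rcases le_or_gt 0 v with hv | hv
    · exact (pow_le_pow_left₀ (le_max_right d 0) (max_le hdv hv) 2).trans hvc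
    · rw [max_eq_right (by linarith)]
      linarith [sq_nonneg v]
  · exact fun h => ⟨max d 0, le_max_left d 0, h⟩

lemma f2_le_coe_iff {z₁ z₂ x₁ x₂ s : ℝ} (hz₁ : 0 ≤ z₁) (hz₂ : 0 ≤ z₂) (hs : 0 ≤ s) :
    f2 z₁ z₂ x₁ x₂ ≤ (s : EReal) ↔
      max (x₁ - x₂) 0 ^ 2 ≤ s * z₁ ∧ max (x₂ - x₁) 0 ^ 2 ≤ s * z₂ := by
  have hsz₁ : 0 ≤ s * z₁ := mul_nonneg hs hz₁
  have hsz₂ : 0 ≤ s * z₂ := mul_nonneg hs hz₂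
  unfold f2
  split_ifs with h
  · rw [pdiv_le_coe_iff (sq_nonneg _) hz₁ hs, max_eq_left (by linarith),
      max_eq_right (by linarith)]
    simp [hsz₂]
  · rw [pdiv_le_coe_iff (sq_nonneg _) hz₂ hs, max_eq_right (by linarith),
      max_eq_left (by linarith), ← neg_sub, neg_sq]
    simp [hsz₁]

theorem f2_extended_formulation_general (z₁ z₂ x₁ x₂ s : ℝ)
    (hz₁ : z₁ ∈ Set.Icc (0:ℝ) 1) (hz₂ : z₂ ∈ Set.Icc (0:ℝ) 1)
    (hs : 0 ≤ s) :
    f2 z₁ z₂ x₁ x₂ ≤ (s : EReal) ↔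
      ∃ v w : ℝ, x₁ - x₂ ≤ v ∧ v^2 ≤ s * z₁ ∧ x₂ - x₁ ≤ w ∧ w^2 ≤ s * z₂ := by
  rw [f2_le_coe_iff hz₁.1 hz₂.1 hs, ← exists_ge_sq_le_iff, ← exists_ge_sq_le_iff]
  simp only [exists_and_exists_comm, and_assoc]

/-- Conic quadratic extended formulation of `conv(X²)`: `f(z,x) ≤ s` iff the
system `v ≥ x₁-x₂, v² ≤ sz₁, w ≥ x₂-x₁, w² ≤ sz₂` is feasible. -/
theorem f2_extended_formulation (z₁ z₂ x₁ x₂ s : ℝ)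
    (hz₁ : z₁ ∈ Set.Icc (0:ℝ) 1) (hz₂ : z₂ ∈ Set.Icc (0:ℝ) 1)
    (hx₁ : 0 ≤ x₁) (hx₂ : 0 ≤ x₂) (hs : 0 ≤ s) :
    f2 z₁ z₂ x₁ x₂ ≤ (s : EReal) ↔
      ∃ v w : ℝ, x₁ - x₂ ≤ v ∧ v^2 ≤ s * z₁ ∧ x₂ - x₁ ≤ w ∧ w^2 ≤ s * z₂ :=
  f2_extended_formulation_general z₁ z₂ x₁ x₂ s hz₁ hz₂ hs
end

section
/- Let d₁, d₂ > 0 with d₁d₂ ≥ 1. Every point (z,x,s) of Z² = {(z,x,s) ∈ {0,1}² × ℝ₊³ : d₁x₁² - 2x₁x₂ + d₂x₂² ≤ s, x₁(1-z₁)=0, x₂(1-z₂)=0} satisfies the valid inequality d₁·f(z₁,z₂,x₁,x₂/d₁) + (x₂²/z₂)(d₂ - 1/d₁) ≤ s. -/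
/- On `Z²` the indicator constraints force every division in the inequality to be by `1` or to be
`0/0`, so its left-hand side is the real number `d₁(x₁ - x₂/d₁)² + x₂²(d₂ - 1/d₁)`. Completing the
square shows this equals `d₁x₁² - 2x₁x₂ + d₂x₂²`, which is at most `s` by definition of `Z²`. -/

lemma pdiv_of_eq_zero_or_eq_one {a z : ℝ} (hz : z = 0 ∨ z = 1) (ha : z = 0 → a = 0) :
    pdiv a z = (a : EReal) := by
  rcases hz with rfl | rfl
  · simp [pdiv, ha rfl]
  · simp [pdiv]

lemma pdiv_sq_of_mul_one_sub_eq_zero {x z : ℝ} (hz : z = 0 ∨ z = 1) (hc : x * (1 - z) = 0) :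
    pdiv (x ^ 2) z = ((x ^ 2 : ℝ) : EReal) :=
  pdiv_of_eq_zero_or_eq_one hz fun h => by simp_all

lemma f2_of_mul_one_sub_eq_zero {z₁ z₂ x₁ x₂ : ℝ} (hz₁ : z₁ = 0 ∨ z₁ = 1) (hz₂ : z₂ = 0 ∨ z₂ = 1)
    (hx₁ : 0 ≤ x₁) (hx₂ : 0 ≤ x₂) (hc₁ : x₁ * (1 - z₁) = 0) (hc₂ : x₂ * (1 - z₂) = 0) :
    f2 z₁ z₂ x₁ x₂ = (((x₁ - x₂) ^ 2 : ℝ) : EReal) := by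
  unfold f2
  split_ifs with hle
  · refine pdiv_of_eq_zero_or_eq_one hz₁ fun h => ?_
    have : x₁ = 0 := by simpa [h] using hc₁
    have : x₂ = 0 := by linarith
    simp_all
  · refine pdiv_of_eq_zero_or_eq_one hz₂ fun h => ?_
    have : x₂ = 0 := by simpa [h] using hc₂
    exact absurd hx₁ (by linarith)

lemma mul_sq_sub_div_add_sq_mul_sub_one_div {d e a b : ℝ} (hd : d ≠ 0) :
    d * (a - b / d) ^ 2 + b ^ 2 * (e - 1 / d) = d * a ^ 2 - 2 * a * b + e * b ^ 2 := by
  field_simp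
  ring

theorem valid_inequality_Z2_general (d₁ d₂ z₁ z₂ x₁ x₂ s : ℝ)
    (hd₁ : 0 < d₁)
    (hz₁ : z₁ = 0 ∨ z₁ = 1) (hz₂ : z₂ = 0 ∨ z₂ = 1)
    (hx₁ : 0 ≤ x₁) (hx₂ : 0 ≤ x₂)
    (hq : d₁ * x₁^2 - 2 * x₁ * x₂ + d₂ * x₂^2 ≤ s)
    (hc₁ : x₁ * (1 - z₁) = 0) (hc₂ : x₂ * (1 - z₂) = 0) :
    (d₁ : EReal) * f2 z₁ z₂ x₁ (x₂ / d₁)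
      + pdiv (x₂^2) z₂ * ((d₂ - 1/d₁ : ℝ) : EReal) ≤ (s : EReal) := by
  have hc₂' : x₂ / d₁ * (1 - z₂) = 0 := by rw [div_mul_eq_mul_div, hc₂, zero_div]
  rw [f2_of_mul_one_sub_eq_zero hz₁ hz₂ hx₁ (by positivity) hc₁ hc₂',
    pdiv_sq_of_mul_one_sub_eq_zero hz₂ hc₂, ← EReal.coe_mul, ← EReal.coe_mul, ← EReal.coe_add,
    EReal.coe_le_coe_iff, mul_sq_sub_div_add_sq_mul_sub_one_div hd₁.ne']
  exact hq

/-- The inequality `d₁·f(z₁,z₂,x₁,x₂/d₁) + (x₂²/z₂)(d₂-1/d₁) ≤ s` is valid for `Z²`. -/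
theorem valid_inequality_Z2 (d₁ d₂ z₁ z₂ x₁ x₂ s : ℝ)
    (hd₁ : 0 < d₁) (hd₂ : 0 < d₂) (hdd : 1 ≤ d₁ * d₂)
    (hz₁ : z₁ = 0 ∨ z₁ = 1) (hz₂ : z₂ = 0 ∨ z₂ = 1)
    (hx₁ : 0 ≤ x₁) (hx₂ : 0 ≤ x₂) (hs : 0 ≤ s)
    (hq : d₁ * x₁^2 - 2 * x₁ * x₂ + d₂ * x₂^2 ≤ s)
    (hc₁ : x₁ * (1 - z₁) = 0) (hc₂ : x₂ * (1 - z₂) = 0) :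
    (d₁ : EReal) * f2 z₁ z₂ x₁ (x₂ / d₁)
      + pdiv (x₂^2) z₂ * ((d₂ - 1/d₁ : ℝ) : EReal) ≤ (s : EReal) :=
  valid_inequality_Z2_general d₁ d₂ z₁ z₂ x₁ x₂ s hd₁ hz₁ hz₂ hx₁ hx₂ hq hc₁ hc₂
end

section
/- Let n = 2, Q a symmetric 2×2 M-matrix with Q₁₂ < 0 written as Q₁₁ = |Q₁₂|d₁, Q₂₂ = |Q₁₂|d₂ with d₁d₂ ≥ 1, d₁,d₂ > 0. For fixed z ∈ (0,1]² and x ∈ ℝ₊², the function d ↦ g(z₁,z₂,x₁,x₂;d₁,d₂) restricted to the feasible set {d₁d₂ ≥ 1, d₁,d₂ ≥ 0} is concave in (d₁,d₂). -/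
/-!
Writing `c = 1/z₂ - 1/z₁ ≥ 0`, the cross term equals `-2 x₁ x₂ / z₁ + c · ψ(d₁)` with
`ψ(s) = min_{u ∈ [0, x₁]} (s u² - 2 u x₂)`, a pointwise minimum of affine functions of `s` and hence
concave; the remaining terms are linear in `d`. The feasible set is the epigraph of `s ↦ s⁻¹` on
`s > 0`, so it is convex.
-/

open Set

theorem concaveOn_of_forall_le_add_linearMap {𝕜 E : Type*} [Field 𝕜] [LinearOrder 𝕜]
    [IsStrictOrderedRing 𝕜] [AddCommGroup E] [Module 𝕜 E] {s : Set E} {f : E → 𝕜}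
    (hs : Convex 𝕜 s) (hf : ∀ t ∈ s, ∃ L : E →ₗ[𝕜] 𝕜, ∀ y ∈ s, f y ≤ f t + L (y - t)) :
    ConcaveOn 𝕜 s f := by
  refine ⟨hs, fun x hx y hy a b ha hb hab => ?_⟩
  obtain ⟨L, hL⟩ := hf _ (hs hx hy ha hb hab)
  have hzero : a • (x - (a • x + b • y)) + b • (y - (a • x + b • y)) = 0 := by
    rw [smul_sub, smul_sub, sub_add_sub_comm, ← add_smul, hab, one_smul, sub_self]
  calc a • f x + b • f y
      ≤ a • (f (a • x + b • y) + L (x - (a • x + b • y)))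
        + b • (f (a • x + b • y) + L (y - (a • x + b • y))) := by
        gcongr
        · exact hL x hx
        · exact hL y hy
    _ = f (a • x + b • y) := by
        rw [smul_add, smul_add, add_add_add_comm, ← add_smul, hab, one_smul, ← map_smul, ← map_smul,
          ← map_add, hzero, map_zero, add_zero]

theorem convex_setOf_one_le_mul {𝕜 : Type*} [Field 𝕜] [LinearOrder 𝕜] [IsStrictOrderedRing 𝕜] :
    Convex 𝕜 {d : 𝕜 × 𝕜 | 1 ≤ d.1 * d.2 ∧ 0 ≤ d.1 ∧ 0 ≤ d.2} := by
  convert (convexOn_zpow (𝕜 := 𝕜) (-1)).convex_epigraph using 1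
  ext ⟨a, b⟩
  simp only [mem_ofPred_eq, mem_Ioi, zpow_neg_one]
  constructor
  · rintro ⟨hab, ha, hb⟩
    have ha' : 0 < a := ha.lt_of_ne (by rintro rfl; simp at hab; linarith)
    exact ⟨ha', by rwa [inv_le_iff_one_le_mul₀' ha']⟩
  · rintro ⟨ha, hb⟩
    exact ⟨(inv_le_iff_one_le_mul₀' ha).1 hb, ha.le, (inv_pos.2 ha).le.trans hb⟩

/-- For `s > 0`, `quadMin p q s` is the minimum of `u ↦ s * u ^ 2 - 2 * u * q` over `u ∈ [0, p]`,
attained at `u = min (q / s) p`. -/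
noncomputable def quadMin (p q s : ℝ) : ℝ :=
  if q ≤ s * p then -q ^ 2 / s else s * p ^ 2 - 2 * p * q

theorem quadMin_le {p q s u : ℝ} (hs : 0 < s) (hu : u ∈ Icc 0 p) :
    quadMin p q s ≤ s * u ^ 2 - 2 * u * q := by
  unfold quadMin
  split_ifs with h
  · have hgap : s * u ^ 2 - 2 * u * q - -q ^ 2 / s = (s * u - q) ^ 2 / s := by
      field_simp; ring
    linarith [div_nonneg (sq_nonneg (s * u - q)) hs.le]
  · have hgap : s * u ^ 2 - 2 * u * q - (s * p ^ 2 - 2 * p * q)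
        = (p - u) * (2 * q - s * (p + u)) := by
      ring
    nlinarith [hu.1, hu.2, mul_le_mul_of_nonneg_left hu.2 hs.le]

theorem exists_quadMin_eq {p q : ℝ} (hp : 0 ≤ p) (hq : 0 ≤ q) {s : ℝ} (hs : 0 < s) :
    ∃ u ∈ Icc 0 p, quadMin p q s = s * u ^ 2 - 2 * u * q := by
  unfold quadMin
  split_ifs with h
  · refine ⟨q / s, ⟨by positivity, (div_le_iff₀' hs).2 h⟩, ?_⟩
    field_simp; ring
  · exact ⟨p, ⟨hp, le_rfl⟩, rfl⟩

theorem concaveOn_quadMin {p q : ℝ} (hp : 0 ≤ p) (hq : 0 ≤ q) :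
    ConcaveOn ℝ (Ioi 0) (quadMin p q) := by
  refine concaveOn_of_forall_le_add_linearMap (convex_Ioi 0) fun t ht => ?_
  obtain ⟨u, hu, htu⟩ := exists_quadMin_eq hp hq ht
  refine ⟨LinearMap.mulLeft ℝ (u ^ 2), fun s hs => ?_⟩
  rw [LinearMap.mulLeft_apply, htu]
  linarith [quadMin_le (q := q) hs hu]

theorem g2_concave_in_d_general (z₁ z₂ x₁ x₂ : ℝ)
    (hz₂ : 0 < z₂) (hz : z₂ ≤ z₁)
    (hx₁ : 0 ≤ x₁) (hx₂ : 0 ≤ x₂) :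
    ConcaveOn ℝ {d : ℝ × ℝ | 1 ≤ d.1 * d.2 ∧ 0 ≤ d.1 ∧ 0 ≤ d.2}
      (fun d : ℝ × ℝ =>
        d.1 * x₁^2 / z₁ + d.2 * x₂^2 / z₂ +
          (if x₂ ≤ d.1 * x₁ then
            -2 * x₁ * x₂ / z₁ - (x₂^2 / d.1) * (1/z₂ - 1/z₁)
          else
            -2 * x₁ * x₂ / z₂ + d.1 * x₁^2 * (1/z₂ - 1/z₁))) := by
  have hc : 0 ≤ 1 / z₂ - 1 / z₁ := sub_nonneg.2 (one_div_le_one_div_of_le hz₂ hz)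
  have hS := convex_setOf_one_le_mul (𝕜 := ℝ)
  have hpos : {d : ℝ × ℝ | 1 ≤ d.1 * d.2 ∧ 0 ≤ d.1 ∧ 0 ≤ d.2} ⊆ Prod.fst ⁻¹' Ioi 0 :=
    fun d ⟨h, hd₁, _⟩ => hd₁.lt_of_ne (by rintro h'; rw [← h', zero_mul] at h; linarith)
  have hcross := (((concaveOn_quadMin hx₁ hx₂).smul hc).comp_linearMap
    (LinearMap.fst ℝ ℝ ℝ)).subset hpos hS
  have hlin :=
    ((x₁ ^ 2 / z₁) • LinearMap.fst ℝ ℝ ℝ + (x₂ ^ 2 / z₂) • LinearMap.snd ℝ ℝ ℝ).concaveOn hS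
  refine (hlin.add (hcross.add_const (-2 * x₁ * x₂ / z₁))).congr fun d _ => ?_
  simp only [Pi.add_apply, Function.comp_apply, LinearMap.add_apply, LinearMap.smul_apply,
    LinearMap.fst_apply, LinearMap.snd_apply, smul_eq_mul]
  unfold quadMin
  split_ifs <;> ring

/-- For fixed `z₁ ≥ z₂ > 0` and `x ∈ ℝ₊²`, the strengthened pairwise term
`g(z,x;d₁,d₂)` is concave in the parameters `(d₁,d₂)` over the feasible set
`{d₁d₂ ≥ 1, d₁,d₂ ≥ 0}`. -/
theorem g2_concave_in_d (z₁ z₂ x₁ x₂ : ℝ)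
    (hz₂ : 0 < z₂) (hz : z₂ ≤ z₁) (hz₁ : z₁ ≤ 1)
    (hx₁ : 0 ≤ x₁) (hx₂ : 0 ≤ x₂) :
    ConcaveOn ℝ {d : ℝ × ℝ | 1 ≤ d.1 * d.2 ∧ 0 ≤ d.1 ∧ 0 ≤ d.2}
      (fun d : ℝ × ℝ =>
        d.1 * x₁^2 / z₁ + d.2 * x₂^2 / z₂ +
          (if x₂ ≤ d.1 * x₁ then
            -2 * x₁ * x₂ / z₁ - (x₂^2 / d.1) * (1/z₂ - 1/z₁)
          else
            -2 * x₁ * x₂ / z₂ + d.1 * x₁^2 * (1/z₂ - 1/z₁))) :=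
  g2_concave_in_d_general z₁ z₂ x₁ x₂ hz₂ hz hx₁ hx₂
end

section
/- Suppose z_i, z_j ∈ (0,1], x_i, x_j ≥ 0, Γ_{ii}, Γ_{jj} > 0 with Γ_{ii}z_i ≥ x_i², Γ_{jj}z_j ≥ x_j², and x_i²/Γ_{ii} ≥ x_j²/Γ_{jj}. Then Γ_{jj} - x_j²/z_i ≥ 0, and the value d* = √((Γ_{jj} - x_j²/z_i)/(Γ_{ii} - x_i²/z_i)) (when Γ_{ii} - x_i²/z_i > 0) satisfies d*·x_i ≥ x_j. -/
/-!
The perspective constraint gives `xᵢ²/Γᵢᵢ ≤ zᵢ`, so the ratio hypothesis yields `xⱼ² ≤ Γⱼⱼ zᵢ`,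
which is feasibility. For consistency, squaring `xⱼ ≤ d* xᵢ` and clearing the denominator leaves
`xⱼ² (Γᵢᵢ - xᵢ²/zᵢ) ≤ (Γⱼⱼ - xⱼ²/zᵢ) xᵢ²`, in which the terms `xᵢ² xⱼ² / zᵢ` cancel: what remains
is the ratio hypothesis `Γᵢᵢ xⱼ² ≤ Γⱼⱼ xᵢ²`.
-/

lemma le_sqrt_div_mul_of_sq_mul_le {p q x y : ℝ} (hq : 0 < q) (hx : 0 ≤ x)
    (h : y ^ 2 * q ≤ p * x ^ 2) : y ≤ Real.sqrt (p / q) * x := by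
  have hsq : y ^ 2 ≤ p / q * x ^ 2 := by
    rwa [div_mul_eq_mul_div, le_div_iff₀ hq]
  calc y ≤ |y| := le_abs_self y
    _ ≤ Real.sqrt (p / q * x ^ 2) := Real.abs_le_sqrt hsq
    _ = Real.sqrt (p / q) * x := by rw [Real.sqrt_mul' _ (sq_nonneg x), Real.sqrt_sq hx]

lemma sub_sq_div_nonneg_of_div_le {b y z : ℝ} (hz : 0 < z) (hb : 0 < b) (h : y ^ 2 / b ≤ z) :
    0 ≤ b - y ^ 2 / z := by
  rw [div_le_iff₀ hb] at h
  rw [sub_nonneg, div_le_iff₀ hz, mul_comm]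
  exact h

lemma sq_mul_sub_le_sub_mul_sq_iff {a b x y z : ℝ} (hz : z ≠ 0) :
    y ^ 2 * (a - x ^ 2 / z) ≤ (b - y ^ 2 / z) * x ^ 2 ↔ a * y ^ 2 ≤ b * x ^ 2 := by
  have hcancel : (b - y ^ 2 / z) * x ^ 2 - y ^ 2 * (a - x ^ 2 / z) = b * x ^ 2 - a * y ^ 2 := by
    field_simp
    ring
  rw [← sub_nonneg, hcancel, sub_nonneg]

theorem optimal_separation_parameter_general (zi xi xj Γii Γjj : ℝ)
    (hzi : zi ∈ Set.Ioc (0:ℝ) 1)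
    (hxi : 0 ≤ xi)
    (hΓii : 0 < Γii) (hΓjj : 0 < Γjj)
    (hpi : xi^2 ≤ Γii * zi)
    (hratio : xj^2 / Γjj ≤ xi^2 / Γii) :
    0 ≤ Γjj - xj^2 / zi ∧
    (0 < Γii - xi^2 / zi →
      xj ≤ Real.sqrt ((Γjj - xj^2 / zi) / (Γii - xi^2 / zi)) * xi) := by
  have hzi0 : 0 < zi := hzi.1
  have hxi_div : xi ^ 2 / Γii ≤ zi := by
    rw [div_le_iff₀ hΓii, mul_comm]
    exact hpi
  refine ⟨sub_sq_div_nonneg_of_div_le hzi0 hΓjj (hratio.trans hxi_div), fun hd => ?_⟩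
  have hcross : Γii * xj ^ 2 ≤ Γjj * xi ^ 2 := by
    rw [div_le_div_iff₀ hΓjj hΓii] at hratio
    linarith
  exact le_sqrt_div_mul_of_sq_mul_le hd hxi
    ((sq_mul_sub_le_sub_mul_sq_iff hzi0.ne').mpr hcross)

/-- Feasibility and consistency of the optimal separation parameter
`d* = √((Γⱼⱼ - xⱼ²/zᵢ)/(Γᵢᵢ - xᵢ²/zᵢ))`. -/
theorem optimal_separation_parameter (zi zj xi xj Γii Γjj : ℝ)
    (hzi : zi ∈ Set.Ioc (0:ℝ) 1) (hzj : zj ∈ Set.Ioc (0:ℝ) 1)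
    (hxi : 0 ≤ xi) (hxj : 0 ≤ xj)
    (hΓii : 0 < Γii) (hΓjj : 0 < Γjj)
    (hpi : xi^2 ≤ Γii * zi) (hpj : xj^2 ≤ Γjj * zj)
    (hratio : xj^2 / Γjj ≤ xi^2 / Γii) :
    0 ≤ Γjj - xj^2 / zi ∧
    (0 < Γii - xi^2 / zi →
      xj ≤ Real.sqrt ((Γjj - xj^2 / zi) / (Γii - xi^2 / zi)) * xi) :=
  optimal_separation_parameter_general zi xi xj Γii Γjj hzi hxi hΓii hΓjj hpi hratio
end
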